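/- The function m ↦ m²/V_ν(m) is analytic and strictly increasing on the domain of means (m₋(ν), m₀(ν)). -/

import Mathlib

open MeasureTheory Set Filter Topology ENNReal

noncomputable section

/-- Cauchy-Stieltjes moment-type transform `M_ν(θ) = ∫ 1/(1-θx) dν(x)`. -/
def Mcs (ν : Measure ℝ) (θ : ℝ) : ℝ := ∫ x, 1 / (1 - θ * x) ∂ν

/-- The mean map `k_ν(θ) = (M_ν(θ) - 1)/(θ M_ν(θ))`. -/
def kcs (ν : Measure ℝ) (θ : ℝ) : ℝ := (Mcs ν θ - 1) / (θ * Mcs ν θ)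

/-- The Cauchy transform `G_ν(z) = ∫ 1/(z-x) dν(x)`. -/
def Gcs (ν : Measure ℝ) (z : ℝ) : ℝ := ∫ x, 1 / (z - x) ∂ν

/-- `Ψ_ν(z) = ∫ zx/(1-zx) dν(x)`. -/
def PsiT (ν : Measure ℝ) (z : ℝ) : ℝ := ∫ x, z * x / (1 - z * x) ∂ν

/-- Topological support of a measure on ℝ. -/
def msupp (ν : Measure ℝ) : Set ℝ := {x | ∀ U ∈ 𝓝 x, ν U ≠ 0}

/-- The natural parameter domain `(θ₋, θ₊) \ {0}`: nonzero `θ` with `θ x < 1` on the support. -/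
def ΘDom (ν : Measure ℝ) : Set ℝ := {θ | θ ≠ 0 ∧ ∀ x ∈ msupp ν, θ * x < 1}

/-- Right-sided parameter domain `(0, θ₊)`. -/
def ΘPlus (ν : Measure ℝ) : Set ℝ := {θ | 0 < θ ∧ ∀ x ∈ msupp ν, θ * x < 1}

/-- `ψ_ν`, the inverse of the mean map `k_ν` on the parameter domain. -/
def ψcs (ν : Measure ℝ) : ℝ → ℝ := Function.invFunOn (kcs ν) (ΘDom ν)

/-- `ψ_ν` for the right-sided family. -/
def ψplus (ν : Measure ℝ) : ℝ → ℝ := Function.invFunOn (kcs ν) (ΘPlus ν)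

/-- `ψ_ν` for the left-sided family (measures on `[0,∞)`, parameter `θ < 0`). -/
def ψminus (ν : Measure ℝ) : ℝ → ℝ := Function.invFunOn (kcs ν) (Iio 0)

/-- The pseudo-variance function `𝕍_ν(m) = m (1/ψ_ν(m) - m)`. -/
def pseudoVar (ν : Measure ℝ) (m : ℝ) : ℝ := m * (1 / ψcs ν m - m)

def pseudoVarMinus (ν : Measure ℝ) (m : ℝ) : ℝ := m * (1 / ψminus ν m - m)

/-- The tilted measure `P_{θ,ν}(dx) = ν(dx)/(M_ν(θ)(1-θx))`. -/
def tilt (ν : Measure ℝ) (θ : ℝ) : Measure ℝ :=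
  ν.withDensity (fun x => ENNReal.ofReal (1 / (Mcs ν θ * (1 - θ * x))))

/-- `Q_{m,ν}`, the element of the CSK family with mean `m`. -/
def Qcsk (ν : Measure ℝ) (m : ℝ) : Measure ℝ := tilt ν (ψcs ν m)

def QcskMinus (ν : Measure ℝ) (m : ℝ) : Measure ℝ := tilt ν (ψminus ν m)

/-- The variance function `V_ν(m) = ∫ (x-m)² dQ_{m,ν}(x)`. -/
def varFun (ν : Measure ℝ) (m : ℝ) : ℝ := ∫ x, (x - m) ^ 2 ∂(Qcsk ν m)

def varFunMinus (ν : Measure ℝ) (m : ℝ) : ℝ := ∫ x, (x - m) ^ 2 ∂(QcskMinus ν m)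

/-- Domain of means (two-sided). -/
def meanDom (ν : Measure ℝ) : Set ℝ := kcs ν '' ΘDom ν

/-- Right-sided domain of means `(m₀(ν), m₊(ν))`. -/
def meanDomPlus (ν : Measure ℝ) : Set ℝ := kcs ν '' ΘPlus ν

/-- Left-sided domain of means `(m₋(ν), m₀(ν))`. -/
def meanDomMinus (ν : Measure ℝ) : Set ℝ := kcs ν '' Iio 0

/-- `χ_ν`, the inverse of `Ψ_ν` on negative reals. -/
def χT (ν : Measure ℝ) : ℝ → ℝ := Function.invFunOn (PsiT ν) (Iio 0)

/-- The S-transform `S_ν(z) = χ_ν(z)(1+z)/z`. -/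
def Stransf (ν : Measure ℝ) (z : ℝ) : ℝ := χT ν z * (1 + z) / z

/-- `m₋(ν) = -1/G_ν(0)` for a measure on `[0,∞)`. -/
def mMinus (ν : Measure ℝ) : ℝ := -(Gcs ν 0)⁻¹

/-- The self-energy (K-transform) `K_ν(z) = z - 1/G_ν(z)`. -/
def KT (ν : Measure ℝ) (z : ℝ) : ℝ := z - 1 / Gcs ν z

/-- A measure is non-degenerate if it is not a Dirac mass. -/
def Nondeg (ν : Measure ℝ) : Prop := ∀ c : ℝ, ν ≠ Measure.dirac c
def pseudoVarPlus (ν : Measure ℝ) (m : ℝ) : ℝ := m * (1 / ψplus ν m - m)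

def QcskPlus (ν : Measure ℝ) (m : ℝ) : Measure ℝ := tilt ν (ψplus ν m)

def varFunPlus (ν : Measure ℝ) (m : ℝ) : ℝ := ∫ x, (x - m) ^ 2 ∂(QcskPlus ν m)

/-- The mean of a measure on `[0,∞)`, as an extended nonnegative real. -/
def m0E (ν : Measure ℝ) : ℝ≥0∞ := ∫⁻ x, ENNReal.ofReal x ∂ν

/-- The Σ-transform `Σ_ν(z) = S_ν(z/(1-z))`. -/
def SigmaT (ν : Measure ℝ) (z : ℝ) : ℝ := Stransf ν (z / (1 - z))

/-- The free Poisson (Marchenko–Pastur) law with density `(1/2π)√((4-x)/x)` on `(0,4)`. -/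
def freePoisson : Measure ℝ :=
  volume.withDensity (fun x => ENNReal.ofReal
    (Set.indicator (Ioo 0 4) (fun y => (1/(2*Real.pi)) * Real.sqrt ((4 - y)/y)) x))

/-!
Write `m = k_ν(θ)` with `θ < 0`. Since `ψ_ν` inverts `k_ν`, `𝕍_ν(m) = m / (θ M_ν(θ))`, hence
`m² / 𝕍_ν(m) = θ M_ν(θ) m = M_ν(θ) - 1`: on the domain of means the function is `M_ν ∘ ψ_ν - 1`.
For `θ < 0`, `M_ν` is analytic, being given near `θ` by the power series with coefficients
`∫ xⁿ / (1 - θx)ⁿ⁺¹ dν`, and increasing, as its derivative `∫ x / (1 - θx)² dν` is positive.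
The derivative of `k_ν` is the `ν`-variance of `x ↦ 1 / (1 - θx)` divided by `(θ M_ν(θ))²`, which is
positive because `ν` is not a Dirac mass; so `k_ν` is strictly increasing and, by the analytic
inverse function theorem, `ψ_ν` is analytic and increasing.
-/

open Function ProbabilityTheory

theorem AnalyticAt.analyticAt_invFunOn {𝕜 : Type*} [NontriviallyNormedField 𝕜] [CompleteSpace 𝕜]
    {f : 𝕜 → 𝕜} {s : Set 𝕜} {a : 𝕜} (hf : AnalyticAt 𝕜 f a) (hf' : deriv f a ≠ 0)
    (hs : s ∈ 𝓝 a) (hinj : InjOn f s) : AnalyticAt 𝕜 (invFunOn f s) (f a) := by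
  have hstrict := hf.hasStrictDerivAt.hasStrictFDerivAt_equiv hf'
  have hinv : invFunOn f s =ᶠ[𝓝 (f a)] hstrict.localInverse f _ a :=
    hstrict.localInverse_unique (eventually_of_mem hs fun _ hx => hinj.leftInvOn_invFunOn hx)
  refine AnalyticAt.congr ?_ hinv.symm
  exact (hstrict.toOpenPartialHomeomorph f).analyticAt_symm'
    hstrict.mem_toOpenPartialHomeomorph_source hf hstrict.hasFDerivAt.fderiv

section

variable {θ x : ℝ}

lemma one_sub_mul_pos (hθ : θ < 0) (hx : 0 ≤ x) : 0 < 1 - θ * x := by nlinarith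

lemma div_one_sub_mul_le (hθ : θ < 0) (hx : 0 ≤ x) : x / (1 - θ * x) ≤ (-θ)⁻¹ := by
  rw [div_le_iff₀ (one_sub_mul_pos hθ hx), inv_mul_eq_div, le_div_iff₀ (neg_pos.2 hθ)]
  nlinarith

lemma one_div_one_sub_mul_le (hθ : θ < 0) (hx : 0 ≤ x) : 1 / (1 - θ * x) ≤ 1 := by
  rw [div_le_one (one_sub_mul_pos hθ hx)]
  nlinarith

lemma pow_div_one_sub_mul_pow_succ (n : ℕ) :
    x ^ n / (1 - θ * x) ^ (n + 1) = 1 / (1 - θ * x) * (x / (1 - θ * x)) ^ n := by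
  rw [div_pow, one_div_mul_eq_div, div_div, pow_succ]

lemma pow_div_one_sub_mul_pow_succ_nonneg (hθ : θ < 0) (hx : 0 ≤ x) (n : ℕ) :
    0 ≤ x ^ n / (1 - θ * x) ^ (n + 1) := by
  have := one_sub_mul_pos hθ hx
  positivity

lemma pow_div_one_sub_mul_pow_succ_le (hθ : θ < 0) (hx : 0 ≤ x) (n : ℕ) :
    x ^ n / (1 - θ * x) ^ (n + 1) ≤ (-θ)⁻¹ ^ n := by
  have := one_sub_mul_pos hθ hx
  rw [pow_div_one_sub_mul_pow_succ, ← one_mul ((-θ)⁻¹ ^ n)]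
  gcongr
  · exact one_div_one_sub_mul_le hθ hx
  · exact div_one_sub_mul_le hθ hx

lemma hasSum_pow_div_one_sub_mul_pow_succ_mul_pow {y : ℝ} (hθ : θ < 0) (hx : 0 ≤ x)
    (hy : |y| < -θ) :
    HasSum (fun n => x ^ n / (1 - θ * x) ^ (n + 1) * y ^ n) (1 / (1 - (θ + y) * x)) := by
  have hd := one_sub_mul_pos hθ hx
  have hr : |y * x / (1 - θ * x)| < 1 := by
    rw [abs_div, abs_mul, abs_of_nonneg hx, abs_of_pos hd, div_lt_one hd]
    nlinarith [abs_nonneg y]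
  have hterm (n : ℕ) :
      1 / (1 - θ * x) * (y * x / (1 - θ * x)) ^ n = x ^ n / (1 - θ * x) ^ (n + 1) * y ^ n := by
    rw [pow_div_one_sub_mul_pow_succ, div_pow, div_pow, mul_pow]
    ring
  have hsum : 1 / (1 - θ * x) * (1 - y * x / (1 - θ * x))⁻¹ = 1 / (1 - (θ + y) * x) := by
    field_simp
    ring
  simpa only [hterm, hsum] using (hasSum_geometric_of_abs_lt_one hr).mul_left (1 / (1 - θ * x))

end

noncomputable def mcsCoeff (ν : Measure ℝ) (θ : ℝ) (n : ℕ) : ℝ :=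
  ∫ x, x ^ n / (1 - θ * x) ^ (n + 1) ∂ν

section

variable {ν : Measure ℝ} {θ : ℝ}

lemma integrable_pow_div_one_sub_mul_pow_succ [IsFiniteMeasure ν] (hν : ∀ᵐ x ∂ν, 0 ≤ x)
    (hθ : θ < 0) (n : ℕ) : Integrable (fun x => x ^ n / (1 - θ * x) ^ (n + 1)) ν := by
  refine Integrable.of_bound (Measurable.aestronglyMeasurable (by fun_prop)) ((-θ)⁻¹ ^ n) ?_
  filter_upwards [hν] with x hx
  rw [Real.norm_of_nonneg (pow_div_one_sub_mul_pow_succ_nonneg hθ hx n)]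
  exact pow_div_one_sub_mul_pow_succ_le hθ hx n

lemma mcsCoeff_nonneg (hν : ∀ᵐ x ∂ν, 0 ≤ x) (hθ : θ < 0) (n : ℕ) : 0 ≤ mcsCoeff ν θ n :=
  integral_nonneg_of_ae <| hν.mono fun _ hx => pow_div_one_sub_mul_pow_succ_nonneg hθ hx n

lemma mcsCoeff_le [IsFiniteMeasure ν] (hν : ∀ᵐ x ∂ν, 0 ≤ x) (hθ : θ < 0) (n : ℕ) :
    mcsCoeff ν θ n ≤ ν.real univ * (-θ)⁻¹ ^ n := by
  have := integral_mono_ae (integrable_pow_div_one_sub_mul_pow_succ hν hθ n)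
    (integrable_const ((-θ)⁻¹ ^ n)) (hν.mono fun _ hx => pow_div_one_sub_mul_pow_succ_le hθ hx n)
  rwa [integral_const, smul_eq_mul] at this

theorem hasFPowerSeriesOnBall_Mcs [IsFiniteMeasure ν] (hν : ∀ᵐ x ∂ν, 0 ≤ x) (hθ : θ < 0) :
    HasFPowerSeriesOnBall (Mcs ν) (FormalMultilinearSeries.ofScalars ℝ (mcsCoeff ν θ)) θ
      (ENNReal.ofReal (-θ)) where
  r_le := by
    refine FormalMultilinearSeries.le_radius_of_bound _ (ν.real univ) fun n => ?_
    rw [FormalMultilinearSeries.ofScalars_norm, Real.norm_of_nonneg (mcsCoeff_nonneg hν hθ n),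
      Real.coe_toNNReal _ (neg_pos.2 hθ).le]
    calc mcsCoeff ν θ n * (-θ) ^ n ≤ ν.real univ * (-θ)⁻¹ ^ n * (-θ) ^ n :=
          mul_le_mul_of_nonneg_right (mcsCoeff_le hν hθ n) (pow_nonneg (neg_nonneg.2 hθ.le) n)
      _ = ν.real univ := by
          rw [mul_assoc, ← mul_pow, inv_mul_cancel₀ (neg_pos.2 hθ).ne', one_pow, mul_one]
  r_pos := by simpa using hθ
  hasSum {y} hy := by
    have hy : |y| < -θ := by
      rwa [mem_eball_zero_iff, ← ofReal_norm, ENNReal.ofReal_lt_ofReal_iff (neg_pos.2 hθ)] at hy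
    have hq : (-θ)⁻¹ * |y| < 1 := by
      rwa [inv_mul_lt_iff₀ (neg_pos.2 hθ), mul_one]
    simp only [FormalMultilinearSeries.ofScalars_apply_eq, smul_eq_mul, mcsCoeff,
      ← integral_mul_const]
    refine hasSum_integral_of_dominated_convergence (fun n _ => ((-θ)⁻¹ * |y|) ^ n)
      (fun n => Measurable.aestronglyMeasurable (by fun_prop)) (fun n => ?_)
      (.of_forall fun _ => ?_) (integrable_const _)
      (hν.mono fun _ hx => hasSum_pow_div_one_sub_mul_pow_succ_mul_pow hθ hx hy)
    · filter_upwards [hν] with x hx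
      rw [norm_mul, norm_pow, Real.norm_eq_abs, Real.norm_eq_abs,
        abs_of_nonneg (pow_div_one_sub_mul_pow_succ_nonneg hθ hx n), mul_pow]
      gcongr
      exact pow_div_one_sub_mul_pow_succ_le hθ hx n
    · exact summable_geometric_of_lt_one
        (mul_nonneg (inv_nonneg.2 (neg_nonneg.2 hθ.le)) (abs_nonneg y)) hq

theorem analyticAt_Mcs [IsFiniteMeasure ν] (hν : ∀ᵐ x ∂ν, 0 ≤ x) (hθ : θ < 0) :
    AnalyticAt ℝ (Mcs ν) θ :=
  (hasFPowerSeriesOnBall_Mcs hν hθ).analyticAt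

theorem hasDerivAt_Mcs [IsFiniteMeasure ν] (hν : ∀ᵐ x ∂ν, 0 ≤ x) (hθ : θ < 0) :
    HasDerivAt (Mcs ν) (mcsCoeff ν θ 1) θ := by
  simpa [FormalMultilinearSeries.ofScalars_apply_eq] using
    (hasFPowerSeriesOnBall_Mcs hν hθ).hasFPowerSeriesAt.hasDerivAt

lemma integrable_one_div_one_sub_mul [IsFiniteMeasure ν] (hν : ∀ᵐ x ∂ν, 0 ≤ x) (hθ : θ < 0) :
    Integrable (fun x => 1 / (1 - θ * x)) ν := by
  simpa using integrable_pow_div_one_sub_mul_pow_succ hν hθ 0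

lemma integral_pos_of_pos_on {α : Type*} [MeasurableSpace α] {μ : Measure α} {f : α → ℝ}
    {s : Set α} (hf : Integrable f μ) (hf₀ : 0 ≤ᵐ[μ] f) (hs : μ s ≠ 0) (hfs : ∀ x ∈ s, 0 < f x) :
    0 < ∫ x, f x ∂μ :=
  (integral_pos_iff_support_of_nonneg_ae hf₀ hf).2 <|
    measure_pos_of_superset (fun x hx => (hfs x hx).ne') hs

lemma Mcs_pos [IsProbabilityMeasure ν] (hν : ∀ᵐ x ∂ν, 0 ≤ x) (hθ : θ < 0) : 0 < Mcs ν θ := by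
  have hIci : ν (Ici 0) = 1 := (prob_compl_eq_zero_iff measurableSet_Ici).1 (ae_iff.1 hν)
  refine integral_pos_of_pos_on (s := Ici 0) (integrable_one_div_one_sub_mul hν hθ)
    (hν.mono fun x hx => ?_) (hIci ▸ one_ne_zero) fun x hx => ?_
  · exact (one_div_pos.2 (one_sub_mul_pos hθ hx)).le
  · exact one_div_pos.2 (one_sub_mul_pos hθ hx)

lemma mcsCoeff_one_pos [IsFiniteMeasure ν] (hν : ∀ᵐ x ∂ν, 0 ≤ x) (hIoi : ν (Ioi 0) ≠ 0)
    (hθ : θ < 0) : 0 < mcsCoeff ν θ 1 :=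
  integral_pos_of_pos_on (integrable_pow_div_one_sub_mul_pow_succ hν hθ 1)
    (hν.mono fun _ hx => pow_div_one_sub_mul_pow_succ_nonneg hθ hx 1) hIoi
    fun x (hx : 0 < x) => by have := one_sub_mul_pos hθ hx.le; positivity

theorem strictMonoOn_Mcs [IsFiniteMeasure ν] (hν : ∀ᵐ x ∂ν, 0 ≤ x) (hIoi : ν (Ioi 0) ≠ 0) :
    StrictMonoOn (Mcs ν) (Iio 0) := by
  refine strictMonoOn_of_deriv_pos (convex_Iio 0)
    (fun θ hθ => (analyticAt_Mcs hν hθ).continuousAt.continuousWithinAt) fun θ hθ => ?_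
  rw [interior_Iio] at hθ
  rw [(hasDerivAt_Mcs hν hθ).deriv]
  exact mcsCoeff_one_pos hν hIoi hθ

lemma integral_one_div_one_sub_mul_sq [IsFiniteMeasure ν] (hν : ∀ᵐ x ∂ν, 0 ≤ x) (hθ : θ < 0) :
    ∫ x, (1 / (1 - θ * x)) ^ 2 ∂ν = Mcs ν θ + θ * mcsCoeff ν θ 1 := by
  have hsplit : (fun x => (1 / (1 - θ * x)) ^ 2)
      =ᵐ[ν] fun x => 1 / (1 - θ * x) + θ * (x ^ 1 / (1 - θ * x) ^ (1 + 1)) := by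
    filter_upwards [hν] with x hx
    have := (one_sub_mul_pos hθ hx).ne'
    field_simp
    ring
  rw [integral_congr_ae hsplit, integral_add (integrable_one_div_one_sub_mul hν hθ)
    ((integrable_pow_div_one_sub_mul_pow_succ hν hθ 1).const_mul θ), integral_const_mul]
  rfl

lemma sq_Mcs_lt_integral [IsProbabilityMeasure ν] (hnd : Nondeg ν) (hν : ∀ᵐ x ∂ν, 0 ≤ x)
    (hθ : θ < 0) : Mcs ν θ ^ 2 < ∫ x, (1 / (1 - θ * x)) ^ 2 ∂ν := by
  set g : ℝ → ℝ := fun x => 1 / (1 - θ * x)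
  have hg : MemLp g 2 ν := by
    refine MemLp.of_bound (Measurable.aestronglyMeasurable (by fun_prop)) 1 ?_
    filter_upwards [hν] with x hx
    rw [Real.norm_of_nonneg (one_div_pos.2 (one_sub_mul_pos hθ hx)).le]
    exact one_div_one_sub_mul_le hθ hx
  suffices hvar : 0 < variance g ν by rwa [variance_eq_sub hg, sub_pos] at hvar
  refine (variance_nonneg g ν).lt_of_ne' fun h0 => ?_
  have hconst : ∀ᵐ x ∂ν, x = (1 - 1 / Mcs ν θ) / θ := by
    filter_upwards [ae_eq_integral_of_variance_eq_zero hg h0, hν] with x hx hx₀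
    have := (one_sub_mul_pos hθ hx₀).ne'
    have := (Mcs_pos hν hθ).ne'
    have := hθ.ne
    change 1 / (1 - θ * x) = Mcs ν θ at hx
    field_simp at hx ⊢
    linarith
  refine hnd ((1 - 1 / Mcs ν θ) / θ) ?_
  calc ν = ν.map id := Measure.map_id.symm
    _ = ν.map fun _ => (1 - 1 / Mcs ν θ) / θ := Measure.map_congr hconst
    _ = _ := by simp [Measure.map_const]

end

section

variable {ν : Measure ℝ} [IsProbabilityMeasure ν] {θ : ℝ}

lemma mul_Mcs_ne_zero (hν : ∀ᵐ x ∂ν, 0 ≤ x) (hθ : θ < 0) : θ * Mcs ν θ ≠ 0 :=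
  mul_ne_zero hθ.ne (Mcs_pos hν hθ).ne'

theorem analyticAt_kcs (hν : ∀ᵐ x ∂ν, 0 ≤ x) (hθ : θ < 0) : AnalyticAt ℝ (kcs ν) θ :=
  ((analyticAt_Mcs hν hθ).sub analyticAt_const).div (analyticAt_id.mul (analyticAt_Mcs hν hθ))
    (mul_Mcs_ne_zero hν hθ)

theorem hasDerivAt_kcs (hν : ∀ᵐ x ∂ν, 0 ≤ x) (hθ : θ < 0) :
    HasDerivAt (kcs ν)
      ((∫ x, (1 / (1 - θ * x)) ^ 2 ∂ν - Mcs ν θ ^ 2) / (θ * Mcs ν θ) ^ 2) θ := by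
  have hM := hasDerivAt_Mcs hν hθ
  refine ((hM.sub_const 1).div ((hasDerivAt_id θ).mul hM) (mul_Mcs_ne_zero hν hθ)).congr_deriv ?_
  simp only [integral_one_div_one_sub_mul_sq hν hθ, Pi.mul_apply, id]
  ring

theorem deriv_kcs_pos (hnd : Nondeg ν) (hν : ∀ᵐ x ∂ν, 0 ≤ x) (hθ : θ < 0) :
    0 < deriv (kcs ν) θ := by
  rw [(hasDerivAt_kcs hν hθ).deriv]
  exact div_pos (sub_pos.2 (sq_Mcs_lt_integral hnd hν hθ))
    (sq_pos_of_ne_zero (mul_Mcs_ne_zero hν hθ))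

theorem strictMonoOn_kcs (hnd : Nondeg ν) (hν : ∀ᵐ x ∂ν, 0 ≤ x) :
    StrictMonoOn (kcs ν) (Iio 0) := by
  refine strictMonoOn_of_deriv_pos (convex_Iio 0)
    (fun θ hθ => (analyticAt_kcs hν hθ).continuousAt.continuousWithinAt) fun θ hθ => ?_
  rw [interior_Iio] at hθ
  exact deriv_kcs_pos hnd hν hθ

lemma ψminus_kcs (hnd : Nondeg ν) (hν : ∀ᵐ x ∂ν, 0 ≤ x) (hθ : θ < 0) :
    ψminus ν (kcs ν θ) = θ :=
  (strictMonoOn_kcs hnd hν).injOn.leftInvOn_invFunOn hθ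

theorem analyticAt_ψminus (hnd : Nondeg ν) (hν : ∀ᵐ x ∂ν, 0 ≤ x) (hθ : θ < 0) :
    AnalyticAt ℝ (ψminus ν) (kcs ν θ) :=
  (analyticAt_kcs hν hθ).analyticAt_invFunOn (deriv_kcs_pos hnd hν hθ).ne' (Iio_mem_nhds hθ)
    (strictMonoOn_kcs hnd hν).injOn

lemma meanDomMinus_mem_nhds (hnd : Nondeg ν) (hν : ∀ᵐ x ∂ν, 0 ≤ x) (hθ : θ < 0) :
    meanDomMinus ν ∈ 𝓝 (kcs ν θ) := by
  rw [← (analyticAt_kcs hν hθ).hasStrictDerivAt.map_nhds_eq (deriv_kcs_pos hnd hν hθ).ne']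
  exact image_mem_map (Iio_mem_nhds hθ)

lemma sq_kcs_div_pseudoVarMinus (hnd : Nondeg ν) (hν : ∀ᵐ x ∂ν, 0 ≤ x) (hθ : θ < 0) :
    kcs ν θ ^ 2 / pseudoVarMinus ν (kcs ν θ) = Mcs ν θ - 1 := by
  have hθM := mul_Mcs_ne_zero hν hθ
  have hV : pseudoVarMinus ν (kcs ν θ) = kcs ν θ / (θ * Mcs ν θ) := by
    rw [pseudoVarMinus, ψminus_kcs hnd hν hθ, kcs]
    field_simp [hθ.ne, (Mcs_pos hν hθ).ne']
    ring
  rw [hV, div_div_eq_mul_div, mul_div_right_comm, sq, mul_self_div_self, kcs,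
    div_mul_cancel₀ _ hθM]

end

/-- `m ↦ m²/𝕍_ν(m)` is analytic and strictly increasing on `(m₋(ν), m₀(ν))`. -/
theorem msq_div_pseudoVar_analytic_strictMono (ν : Measure ℝ) [IsProbabilityMeasure ν]
    (hnd : Nondeg ν) (hpos : ν (Iio 0) = 0) (hatom : ν {0} < 1) :
    AnalyticOnNhd ℝ (fun m => m ^ 2 / pseudoVarMinus ν m) (meanDomMinus ν) ∧
    StrictMonoOn (fun m => m ^ 2 / pseudoVarMinus ν m) (meanDomMinus ν) := by
  have hν : ∀ᵐ x ∂ν, 0 ≤ x := ae_iff.2 (measure_mono_null (fun _ hx => not_le.1 hx) hpos)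
  have hIoi : ν (Ioi 0) ≠ 0 := by
    intro h
    have : ν {0}ᶜ = 0 := by rw [← Iio_union_Ioi]; exact measure_union_null hpos h
    exact hatom.ne ((prob_compl_eq_zero_iff (measurableSet_singleton 0)).1 this)
  constructor
  · rintro _ ⟨θ, hθ, rfl⟩
    have hMψ : AnalyticAt ℝ (fun m => Mcs ν (ψminus ν m) - 1) (kcs ν θ) :=
      ((analyticAt_Mcs hν hθ).comp_of_eq (analyticAt_ψminus hnd hν hθ)
        (ψminus_kcs hnd hν hθ)).sub analyticAt_const
    refine hMψ.congr (eventually_of_mem (meanDomMinus_mem_nhds hnd hν hθ) ?_)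
    rintro _ ⟨θ', hθ', rfl⟩
    dsimp only
    rw [ψminus_kcs hnd hν hθ', sq_kcs_div_pseudoVarMinus hnd hν hθ']
  · rintro _ ⟨θ₁, hθ₁, rfl⟩ _ ⟨θ₂, hθ₂, rfl⟩ hlt
    simp only [sq_kcs_div_pseudoVarMinus hnd hν hθ₁, sq_kcs_div_pseudoVarMinus hnd hν hθ₂]
    exact sub_lt_sub_right (strictMonoOn_Mcs hν hIoi hθ₁ hθ₂
      (((strictMonoOn_kcs hnd hν).lt_iff_lt hθ₁ hθ₂).1 hlt)) 1
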